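/- Let (z_i)_{i≥0} and (y_i)_{i≥0} be sequences in Z^d with z_0 = y_0 = 0 such that (a) for every j with 2 ≤ j ≤ d and every i ≥ 0, y_i · e_j = z_i · e_j, and (b) the sequence (y_i · e_1 − z_i · e_1)_{i≥0} is non-decreasing. If n is an (e_1,e_2)-tan point index for (z_i), i.e. z_n · e_1 > z_k · e_1 for all 0 ≤ k ≤ n−1 with z_n · e_2 = z_k · e_2, then y_n ∉ { y_i : 0 ≤ i ≤ n−1 }. -/
import Mathlib

/-- If `(z_i)` and `(y_i)` are coupled paths in `ℤ^d` agreeing in coordinates `2,…,d`,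
with `y_i·e_1 − z_i·e_1` non-decreasing, and `n` is an `(e_1,e_2)`-tan point index of `z`,
then `y_n` is not among `y_0,…,y_{n−1}`. -/
theorem stmt0 (d : ℕ) (hd : 2 ≤ d) (z y : ℕ → Fin d → ℤ)
    (hz0 : z 0 = 0) (hy0 : y 0 = 0)
    (hcoord : ∀ j : Fin d, 1 ≤ j.val → ∀ i : ℕ, y i j = z i j)
    (hmono : Monotone (fun i => y i ⟨0, by omega⟩ - z i ⟨0, by omega⟩))
    (n : ℕ)
    (htan : ∀ k < n, z n ⟨1, by omega⟩ = z k ⟨1, by omega⟩ →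
      z k ⟨0, by omega⟩ < z n ⟨0, by omega⟩) :
    ∀ i < n, y n ≠ y i := by
  intro i hi heq
  have h2 : z n ⟨1, by omega⟩ = z i ⟨1, by omega⟩ := by
    rw [← hcoord ⟨1, by omega⟩ (by simp) n, ← hcoord ⟨1, by omega⟩ (by simp) i, heq]
  have hlt := htan i hi h2
  have hm := hmono (le_of_lt hi)
  simp only at hm
  have h0 : y n ⟨0, by omega⟩ = y i ⟨0, by omega⟩ := by rw [heq]
  omega
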